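/- Let d be a positive integer and let a, b be integers with 1 ≤ a ≤ b and a + b ≤ d. Then the cardinality N_d(a,b) := |O^{(d)}_{a,b}| equals C(d,a)·C(d−a,b)·2^{a+b−2} if a < b, and equals (1/2)·C(d,a)·C(d−a,b)·2^{a+b−2} if a = b, where C(n,k) denotes the binomial coefficient. -/

import Mathlib

open scoped BigOperators

noncomputable def uvec {d : ℕ} (A : Finset (Fin d)) (ε : Fin d → ℝ) :
    EuclideanSpace ℝ (Fin d) :=
  (Real.sqrt A.card)⁻¹ • ∑ i ∈ A, ε i • (EuclideanSpace.single i (1 : ℝ))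

def IsSign {d : ℕ} (A : Finset (Fin d)) (ε : Fin d → ℝ) : Prop :=
  ∀ i, if i ∈ A then (ε i = 1 ∨ ε i = -1) else ε i = 1

def IsIndex (d a b : ℕ) (A B : Finset (Fin d)) (ε δ : Fin d → ℝ) : Prop :=
  Disjoint A B ∧ A.card = a ∧ B.card = b ∧ IsSign A ε ∧ IsSign B δ

noncomputable def Wspan {d : ℕ} (A B : Finset (Fin d)) (ε δ : Fin d → ℝ) :
    Submodule ℝ (EuclideanSpace ℝ (Fin d)) :=
  Submodule.span ℝ {uvec A ε, uvec B δ}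

def orbitSet (d a b : ℕ) : Set (Submodule ℝ (EuclideanSpace ℝ (Fin d))) :=
  {W | ∃ A B ε δ, IsIndex d a b A B ε δ ∧ W = Wspan A B ε δ}

/-!
A subspace `W_τ` determines its index up to the evident symmetries. The only vectors
`u_{A',ε'}` lying in `span(u_{A,ε}, v_{B,δ})` have support `A`, `B` or `A ∪ B` (the support of
`α u + β v` is read off coordinatewise), and when the support is `A` the signs are `±ε`. So
`W_τ = W_τ'` exactly when `τ'` arises from `τ` by flipping `ε`, flipping `δ` and, only if
`a = b`, swapping the two blocks. Normalising the sign at the minimum of each block to `+1`,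
and for `a = b` putting the block with the smaller minimum first, selects one index per
subspace; these representatives are counted directly.
-/

open Finset

lemma Submodule.span_pair_smul_eq {R M : Type*} [Semiring R] [AddCommMonoid M] [Module R M]
    {r s : R} (hr : IsUnit r) (hs : IsUnit s) (x y : M) :
    span R {r • x, s • y} = span R {x, y} := by
  rw [span_insert, span_insert, span_singleton_smul_eq hr, span_singleton_smul_eq hs]

section LinearOrder

variable {α : Type*} [LinearOrder α]

def aboveMin (A : Finset α) : Finset α :=
  A.filter fun x => A.min < x

lemma aboveMin_eq_erase {A : Finset α} (hA : A.Nonempty) :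
    aboveMin A = A.erase (A.min' hA) := by
  ext x
  rw [aboveMin, Finset.mem_filter, Finset.mem_erase, ← Finset.coe_min' hA, WithTop.coe_lt_coe]
  exact ⟨fun ⟨hx, hlt⟩ => ⟨hlt.ne', hx⟩, fun ⟨hne, hx⟩ => ⟨hx, (A.min'_le x hx).lt_of_ne' hne⟩⟩

lemma min'_notMem_of_subset_aboveMin {A S : Finset α} (hA : A.Nonempty) (hS : S ⊆ aboveMin A) :
    A.min' hA ∉ S := fun hm => by
  simpa [aboveMin_eq_erase hA] using hS hm

lemma card_aboveMin {A : Finset α} (hA : A.Nonempty) : #(aboveMin A) = #A - 1 := by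
  rw [aboveMin_eq_erase hA, Finset.card_erase_of_mem (A.min'_mem hA)]

lemma min_ne_min_of_disjoint {A B : Finset α} (hA : A.Nonempty) (hB : B.Nonempty)
    (hAB : Disjoint A B) : A.min ≠ B.min := by
  rw [← Finset.coe_min' hA, ← Finset.coe_min' hB, Ne, WithTop.coe_inj]
  intro h
  exact Finset.disjoint_left.1 hAB (A.min'_mem hA) (h ▸ B.min'_mem hB)

end LinearOrder

lemma two_mul_card_filter_lt {β γ : Type*} [LinearOrder γ] (s : Finset (β × β)) (f : β → γ)
    (hswap : ∀ q ∈ s, q.swap ∈ s) (hne : ∀ q ∈ s, f q.1 ≠ f q.2) :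
    2 * #(s.filter fun q => f q.1 < f q.2) = #s := by
  have hgt : s.filter (fun q => ¬ f q.1 < f q.2) = s.filter (fun q => f q.2 < f q.1) :=
    Finset.filter_congr fun q hq => not_lt.trans (hne q hq).symm.le_iff_lt
  have hswapcard : #(s.filter fun q => f q.2 < f q.1) = #(s.filter fun q => f q.1 < f q.2) := by
    refine Finset.card_nbij' Prod.swap Prod.swap ?_ ?_ (fun q _ => q.swap_swap)
      (fun q _ => q.swap_swap) <;>
    · intro q hq
      simp only [Finset.coe_filter, Set.mem_ofPred_eq] at hq ⊢
      exact ⟨hswap q hq.1, hq.2⟩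
  rw [← Finset.card_filter_add_card_filter_not (s := s) (fun q => f q.1 < f q.2), hgt, hswapcard,
    two_mul]

def disjointPairs (α : Type*) [Fintype α] [DecidableEq α] (a b : ℕ) :
    Finset (Finset α × Finset α) :=
  {q | #q.1 = a ∧ #q.2 = b ∧ Disjoint q.1 q.2}

lemma card_disjointPairs (α : Type*) [Fintype α] [DecidableEq α] (a b : ℕ) :
    #(disjointPairs α a b) = (Fintype.card α).choose a * (Fintype.card α - a).choose b := by
  have hbij : #((univ.powersetCard a).sigma fun A : Finset α => Aᶜ.powersetCard b) =
      #(disjointPairs α a b) := by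
    refine Finset.card_nbij' (fun x => (x.1, x.2)) (fun q => ⟨q.1, q.2⟩) ?_ ?_
      (fun _ _ => rfl) (fun _ _ => rfl)
    all_goals
      intro x
      simp only [coe_sigma, Set.mem_sigma_iff, disjointPairs, coe_filter, mem_coe, mem_univ,
        mem_powersetCard, subset_univ, subset_compl_iff_disjoint_left, true_and,
        Set.mem_ofPred_eq]
      tauto
  rw [← hbij, Finset.card_sigma, Finset.sum_congr rfl fun A hA => by
      rw [Finset.card_powersetCard, Finset.card_compl, Finset.mem_powersetCard_univ.1 hA],
    Finset.sum_const, Finset.card_powersetCard, Finset.card_univ, smul_eq_mul]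

variable {d : ℕ}

lemma uvec_apply (A : Finset (Fin d)) (ε : Fin d → ℝ) (j : Fin d) :
    uvec A ε j = if j ∈ A then (Real.sqrt #A)⁻¹ * ε j else 0 := by
  simp only [uvec, PiLp.smul_apply, WithLp.ofLp_sum, Finset.sum_apply, PiLp.smul_apply,
    PiLp.single_apply, smul_eq_mul, mul_ite, mul_one, mul_zero, Finset.sum_ite_eq]

lemma IsSign.eq_one_or_eq_neg_one {A : Finset (Fin d)} {ε : Fin d → ℝ} (h : IsSign A ε)
    {i : Fin d} (hi : i ∈ A) : ε i = 1 ∨ ε i = -1 := by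
  simpa [hi] using h i

lemma IsSign.ne_zero {A : Finset (Fin d)} {ε : Fin d → ℝ} (h : IsSign A ε) {i : Fin d}
    (hi : i ∈ A) : ε i ≠ 0 := by
  rcases h.eq_one_or_eq_neg_one hi with h1 | h1 <;> simp [h1]

lemma uvec_apply_ne_zero_iff {A : Finset (Fin d)} {ε : Fin d → ℝ} (hε : IsSign A ε)
    (j : Fin d) : uvec A ε j ≠ 0 ↔ j ∈ A := by
  rw [uvec_apply]
  split_ifs with hj
  · have : (0 : ℝ) < #A := by exact_mod_cast Finset.card_pos.2 ⟨j, hj⟩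
    exact iff_of_true (mul_ne_zero (by positivity) (hε.ne_zero hj)) hj
  · simp [hj]

lemma eq_and_sign_eq_of_uvec_eq_smul {A A' : Finset (Fin d)} {ε ε' : Fin d → ℝ} {α : ℝ}
    (hε : IsSign A ε) (hε' : IsSign A' ε') (hA' : A'.Nonempty)
    (h : uvec A' ε' = α • uvec A ε) : A' = A ∧ ∀ i ∈ A, ε' i = α * ε i := by
  have hcoord (j : Fin d) : uvec A' ε' j = α * uvec A ε j := by rw [h]; rfl
  have hα : α ≠ 0 := by
    obtain ⟨i, hi⟩ := hA'
    rintro rfl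
    exact (uvec_apply_ne_zero_iff hε' i).2 hi (by rw [hcoord, zero_mul])
  have hAA : A' = A := by
    ext j
    rw [← uvec_apply_ne_zero_iff hε', ← uvec_apply_ne_zero_iff hε, hcoord, mul_ne_zero_iff,
      and_iff_right hα]
  subst hAA
  refine ⟨rfl, fun i hi => ?_⟩
  have hi' := hcoord i
  rw [uvec_apply, uvec_apply, if_pos hi, if_pos hi] at hi'
  have : (0 : ℝ) < #A' := by exact_mod_cast Finset.card_pos.2 hA'
  have : (Real.sqrt #A')⁻¹ ≠ 0 := by positivity
  exact mul_left_cancel₀ this (by rw [hi']; ring)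

lemma uvec_apply_of_notMem {A : Finset (Fin d)} (ε : Fin d → ℝ) {j : Fin d} (hj : j ∉ A) :
    uvec A ε j = 0 := by
  rw [uvec_apply, if_neg hj]

lemma uvec_mem_wspan {A B A' : Finset (Fin d)} {ε δ ε' : Fin d → ℝ} (hAB : Disjoint A B)
    (hε : IsSign A ε) (hδ : IsSign B δ) (hε' : IsSign A' ε') (hA' : A'.Nonempty)
    (hm : uvec A' ε' ∈ Wspan A B ε δ) :
    (A' = A ∧ ∃ α : ℝ, ∀ i ∈ A, ε' i = α * ε i) ∨
      (A' = B ∧ ∃ β : ℝ, ∀ i ∈ B, ε' i = β * δ i) ∨ A' = A ∪ B := by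
  obtain ⟨α, β, hx⟩ := Submodule.mem_span_pair.1 hm
  by_cases hβ : β = 0
  · subst hβ
    rw [zero_smul, add_zero] at hx
    obtain ⟨rfl, hsign⟩ := eq_and_sign_eq_of_uvec_eq_smul hε hε' hA' hx.symm
    exact Or.inl ⟨rfl, α, hsign⟩
  by_cases hα : α = 0
  · subst hα
    rw [zero_smul, zero_add] at hx
    obtain ⟨rfl, hsign⟩ := eq_and_sign_eq_of_uvec_eq_smul hδ hε' hA' hx.symm
    exact Or.inr (Or.inl ⟨rfl, β, hsign⟩)
  refine Or.inr (Or.inr (Finset.ext fun j => ?_))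
  have hcoord : uvec A' ε' j = α * uvec A ε j + β * uvec B δ j := by rw [← hx]; rfl
  rw [← uvec_apply_ne_zero_iff hε', hcoord, Finset.mem_union]
  by_cases hjA : j ∈ A
  · have hjB : j ∉ B := Finset.disjoint_left.1 hAB hjA
    rw [uvec_apply_of_notMem δ hjB, mul_zero, add_zero]
    exact iff_of_true (mul_ne_zero hα ((uvec_apply_ne_zero_iff hε j).2 hjA)) (Or.inl hjA)
  by_cases hjB : j ∈ B
  · rw [uvec_apply_of_notMem ε hjA, mul_zero, zero_add]
    exact iff_of_true (mul_ne_zero hβ ((uvec_apply_ne_zero_iff hδ j).2 hjB)) (Or.inr hjB)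
  · rw [uvec_apply_of_notMem ε hjA, uvec_apply_of_notMem δ hjB]
    simp [hjA, hjB]

lemma eq_or_swap_of_wspan_eq {a b : ℕ} (ha : 1 ≤ a) (hb : 1 ≤ b)
    {A B A' B' : Finset (Fin d)} {ε δ ε' δ' : Fin d → ℝ}
    (h : IsIndex d a b A B ε δ) (h' : IsIndex d a b A' B' ε' δ')
    (hW : Wspan A B ε δ = Wspan A' B' ε' δ') :
    (A' = A ∧ B' = B ∧ (∃ α : ℝ, ∀ i ∈ A, ε' i = α * ε i) ∧ ∃ β : ℝ, ∀ i ∈ B, δ' i = β * δ i) ∨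
      (A' = B ∧ B' = A) := by
  obtain ⟨hAB, hA, hB, hε, hδ⟩ := h
  obtain ⟨hAB', hA', hB', hε', hδ'⟩ := h'
  have hne : A' ≠ B' := by
    rintro rfl
    rw [disjoint_self, Finset.bot_eq_empty] at hAB'
    subst hAB'
    simp at hA'; omega
  have hunion : #(A ∪ B) = a + b := by rw [Finset.card_union_of_disjoint hAB, hA, hB]
  have hu : uvec A' ε' ∈ Wspan A B ε δ := hW ▸ Submodule.subset_span (Set.mem_insert _ _)
  have hv : uvec B' δ' ∈ Wspan A B ε δ :=
    hW ▸ Submodule.subset_span (Set.mem_insert_of_mem _ rfl)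
  have hA'ne : A'.Nonempty := Finset.card_pos.1 (by omega)
  have hB'ne : B'.Nonempty := Finset.card_pos.1 (by omega)
  rcases uvec_mem_wspan hAB hε hδ hε' hA'ne hu with ⟨rfl, hsA⟩ | ⟨rfl, -⟩ | hAU
  · rcases uvec_mem_wspan hAB hε hδ hδ' hB'ne hv with ⟨rfl, -⟩ | ⟨rfl, hsB⟩ | rfl
    · exact absurd rfl hne
    · exact Or.inl ⟨rfl, rfl, hsA, hsB⟩
    · omega
  · rcases uvec_mem_wspan hAB hε hδ hδ' hB'ne hv with ⟨rfl, -⟩ | ⟨rfl, -⟩ | rfl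
    · exact Or.inr ⟨rfl, rfl⟩
    · exact absurd rfl hne
    · omega
  · subst hAU; omega

lemma wspan_comm (A B : Finset (Fin d)) (ε δ : Fin d → ℝ) : Wspan B A δ ε = Wspan A B ε δ := by
  rw [Wspan, Wspan, Set.pair_comm]

def signOf (S : Finset (Fin d)) : Fin d → ℝ := fun i => if i ∈ S then -1 else 1

lemma isSign_signOf {S A : Finset (Fin d)} (h : S ⊆ A) : IsSign A (signOf S) := by
  intro i
  by_cases hS : i ∈ S
  · simp [signOf, hS, h hS]
  · split_ifs <;> simp [signOf, hS]

lemma exists_uvec_signOf_eq_smul {A : Finset (Fin d)} {ε : Fin d → ℝ} (hε : IsSign A ε)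
    (hA : A.Nonempty) : ∃ S ⊆ aboveMin A, ∃ c : ℝ, c ≠ 0 ∧ uvec A (signOf S) = c • uvec A ε := by
  set m := A.min' hA
  have hm : m ∈ A := A.min'_mem hA
  refine ⟨A.filter (ε · ≠ ε m), fun i hi => ?_, ε m, hε.ne_zero hm, ?_⟩
  · rw [Finset.mem_filter] at hi
    rw [aboveMin_eq_erase hA, Finset.mem_erase]
    exact ⟨fun h => hi.2 (h ▸ rfl), hi.1⟩
  ext j
  rw [PiLp.smul_apply, uvec_apply, uvec_apply, smul_eq_mul]
  split_ifs with hj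
  · suffices signOf (A.filter (ε · ≠ ε m)) j = ε m * ε j by rw [this]; ring
    rcases hε.eq_one_or_eq_neg_one hj with h1 | h1 <;>
      rcases hε.eq_one_or_eq_neg_one hm with h2 | h2 <;> norm_num [signOf, hj, h1, h2]
  · rw [mul_zero]

lemma exists_wspan_signOf_eq {A B : Finset (Fin d)} {ε δ : Fin d → ℝ} (hε : IsSign A ε)
    (hδ : IsSign B δ) (hA : A.Nonempty) (hB : B.Nonempty) :
    ∃ S ⊆ aboveMin A, ∃ T ⊆ aboveMin B, Wspan A B (signOf S) (signOf T) = Wspan A B ε δ := by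
  obtain ⟨S, hS, c, hc, hu⟩ := exists_uvec_signOf_eq_smul hε hA
  obtain ⟨T, hT, e, he, hv⟩ := exists_uvec_signOf_eq_smul hδ hB
  refine ⟨S, hS, T, hT, ?_⟩
  rw [Wspan, Wspan, hu, hv, Submodule.span_pair_smul_eq hc.isUnit he.isUnit]

lemma eq_of_signOf_eq_mul {A S S' : Finset (Fin d)} {α : ℝ} (hA : A.Nonempty)
    (hS : S ⊆ aboveMin A) (hS' : S' ⊆ aboveMin A) (h : ∀ i ∈ A, signOf S' i = α * signOf S i) :
    S' = S := by
  have hα : α = 1 := by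
    have := h _ (A.min'_mem hA)
    simpa [signOf, min'_notMem_of_subset_aboveMin hA hS,
      min'_notMem_of_subset_aboveMin hA hS'] using this.symm
  subst hα
  have hSA : S ⊆ A := hS.trans (Finset.filter_subset _ _)
  have hSA' : S' ⊆ A := hS'.trans (Finset.filter_subset _ _)
  ext i
  by_cases hi : i ∈ A
  · have := h i hi
    by_cases h1 : i ∈ S <;> by_cases h2 : i ∈ S' <;> simp [signOf, h1, h2] at this ⊢ <;>
      norm_num at this
  · exact iff_of_false (fun h => hi (hSA' h)) (fun h => hi (hSA h))

/-- For `a = b` the two blocks are interchangeable, so they are ordered by their minima. -/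
def orderedPairs (d a b : ℕ) : Finset (Finset (Fin d) × Finset (Fin d)) :=
  (disjointPairs (Fin d) a b).filter fun q => a = b → q.1.min < q.2.min

lemma mk_mem_orderedPairs {a b : ℕ} {A B : Finset (Fin d)} :
    (A, B) ∈ orderedPairs d a b ↔ #A = a ∧ #B = b ∧ Disjoint A B ∧ (a = b → A.min < B.min) := by
  simp [orderedPairs, disjointPairs, and_assoc]

lemma orderedPairs_of_lt {a b : ℕ} (h : a < b) :
    orderedPairs d a b = disjointPairs (Fin d) a b :=
  Finset.filter_true_of_mem fun _ _ hab => absurd hab h.ne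

lemma two_mul_card_orderedPairs_self {a : ℕ} (ha : 1 ≤ a) :
    2 * #(orderedPairs d a a) = #(disjointPairs (Fin d) a a) := by
  have hmem {q : Finset (Fin d) × Finset (Fin d)} (hq : q ∈ disjointPairs (Fin d) a a) :
      #q.1 = a ∧ #q.2 = a ∧ Disjoint q.1 q.2 := by
    simpa [disjointPairs] using hq
  rw [orderedPairs, Finset.filter_congr fun _ _ => imp_iff_right rfl]
  refine two_mul_card_filter_lt _ Finset.min (fun q hq => ?_) (fun q hq => ?_)
  · obtain ⟨h1, h2, h12⟩ := hmem hq
    simpa [disjointPairs] using ⟨h2, h1, h12.symm⟩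
  · obtain ⟨h1, h2, h12⟩ := hmem hq
    exact min_ne_min_of_disjoint (Finset.card_pos.1 (by omega)) (Finset.card_pos.1 (by omega)) h12

/-- Index data `⟨(A, B), (S, T)⟩` stands for the blocks `A`, `B` with signs `signOf S`,
`signOf T`. -/
abbrev IndexData (d : ℕ) := Σ _ : Finset (Fin d) × Finset (Fin d), Finset (Fin d) × Finset (Fin d)

/-- Representatives with sign `+1` at the minimum of each block. -/
def canonicalIndices (d a b : ℕ) : Finset (IndexData d) :=
  (orderedPairs d a b).sigma fun q => (aboveMin q.1).powerset ×ˢ (aboveMin q.2).powerset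

lemma mk_mem_canonicalIndices {a b : ℕ} {A B S T : Finset (Fin d)} :
    (⟨(A, B), (S, T)⟩ : IndexData d) ∈ canonicalIndices d a b ↔
      (A, B) ∈ orderedPairs d a b ∧ S ⊆ aboveMin A ∧ T ⊆ aboveMin B := by
  simp [canonicalIndices]

lemma card_canonicalIndices {a b : ℕ} (ha : 1 ≤ a) (hb : 1 ≤ b) :
    #(canonicalIndices d a b) = #(orderedPairs d a b) * 2 ^ (a + b - 2) := by
  rw [canonicalIndices, Finset.card_sigma, Finset.sum_const_nat fun q hq => ?_, mul_comm]
  obtain ⟨hA, hB, -⟩ := mk_mem_orderedPairs.1 hq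
  rw [Finset.card_product, Finset.card_powerset, Finset.card_powerset,
    card_aboveMin (Finset.card_pos.1 (by omega)), card_aboveMin (Finset.card_pos.1 (by omega)),
    hA, hB, ← pow_add]
  congr 1
  omega

noncomputable def wspanOfIndex (x : IndexData d) : Submodule ℝ (EuclideanSpace ℝ (Fin d)) :=
  Wspan x.1.1 x.1.2 (signOf x.2.1) (signOf x.2.2)

lemma isIndex_of_mk_mem_canonicalIndices {a b : ℕ} {A B S T : Finset (Fin d)}
    (hx : ⟨(A, B), (S, T)⟩ ∈ canonicalIndices d a b) :
    IsIndex d a b A B (signOf S) (signOf T) := by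
  obtain ⟨hq, hS, hT⟩ := mk_mem_canonicalIndices.1 hx
  obtain ⟨hA, hB, hAB, -⟩ := mk_mem_orderedPairs.1 hq
  exact ⟨hAB, hA, hB, isSign_signOf (hS.trans (Finset.filter_subset _ _)),
    isSign_signOf (hT.trans (Finset.filter_subset _ _))⟩

lemma wspan_mem_image_canonicalIndices {a b : ℕ} (ha : 1 ≤ a) (hb : 1 ≤ b)
    {A B : Finset (Fin d)} {ε δ : Fin d → ℝ} (h : IsIndex d a b A B ε δ)
    (hmin : a = b → A.min < B.min) :
    Wspan A B ε δ ∈ wspanOfIndex '' (canonicalIndices d a b : Set (IndexData d)) := by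
  obtain ⟨hAB, hA, hB, hε, hδ⟩ := h
  obtain ⟨S, hS, T, hT, hW⟩ := exists_wspan_signOf_eq hε hδ (Finset.card_pos.1 (by omega))
    (Finset.card_pos.1 (by omega))
  exact ⟨⟨(A, B), (S, T)⟩,
    mk_mem_canonicalIndices.2 ⟨mk_mem_orderedPairs.2 ⟨hA, hB, hAB, hmin⟩, hS, hT⟩, hW⟩

lemma orbitSet_eq_image {a b : ℕ} (ha : 1 ≤ a) (hb : 1 ≤ b) :
    orbitSet d a b = wspanOfIndex '' (canonicalIndices d a b : Set (IndexData d)) := by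
  ext W
  constructor
  · rintro ⟨A, B, ε, δ, h, rfl⟩
    by_cases hmin : a = b → A.min < B.min
    · exact wspan_mem_image_canonicalIndices ha hb h hmin
    obtain ⟨rfl, hge⟩ := Classical.not_imp.1 hmin
    obtain ⟨hAB, hA, hB, hε, hδ⟩ := h
    have hlt : B.min < A.min := (not_lt.1 hge).lt_of_ne
      (min_ne_min_of_disjoint (Finset.card_pos.1 (by omega)) (Finset.card_pos.1 (by omega))
        hAB).symm
    rw [← wspan_comm]
    exact wspan_mem_image_canonicalIndices hb ha ⟨hAB.symm, hB, hA, hδ, hε⟩ fun _ => hlt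
  · rintro ⟨⟨⟨A, B⟩, S, T⟩, hx, rfl⟩
    exact ⟨A, B, signOf S, signOf T, isIndex_of_mk_mem_canonicalIndices hx, rfl⟩

lemma injOn_wspanOfIndex {a b : ℕ} (ha : 1 ≤ a) (hb : 1 ≤ b) :
    Set.InjOn wspanOfIndex (canonicalIndices d a b : Set (IndexData d)) := by
  rintro ⟨⟨A, B⟩, S, T⟩ hx ⟨⟨A', B'⟩, S', T'⟩ hx' hW
  obtain ⟨hq, hS, hT⟩ := mk_mem_canonicalIndices.1 hx
  obtain ⟨hq', hS', hT'⟩ := mk_mem_canonicalIndices.1 hx'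
  obtain ⟨hA, hB, -, hmin⟩ := mk_mem_orderedPairs.1 hq
  obtain ⟨hA', -, -, hmin'⟩ := mk_mem_orderedPairs.1 hq'
  rcases eq_or_swap_of_wspan_eq ha hb (isIndex_of_mk_mem_canonicalIndices hx)
      (isIndex_of_mk_mem_canonicalIndices hx') hW with
    ⟨rfl, rfl, ⟨α, hα⟩, ⟨β, hβ⟩⟩ | ⟨rfl, rfl⟩
  · rw [eq_of_signOf_eq_mul (Finset.card_pos.1 (by omega)) hS hS' hα,
      eq_of_signOf_eq_mul (Finset.card_pos.1 (by omega)) hT hT' hβ]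
  · have hab : a = b := hA'.symm.trans hB
    exact absurd (hmin hab) (hmin' hab).asymm

lemma ncard_orbitSet {a b : ℕ} (ha : 1 ≤ a) (hb : 1 ≤ b) :
    (orbitSet d a b).ncard = #(orderedPairs d a b) * 2 ^ (a + b - 2) := by
  rw [orbitSet_eq_image ha hb, (injOn_wspanOfIndex ha hb).ncard_image,
    Set.ncard_coe_finset, card_canonicalIndices ha hb]

theorem stmt9_general (d a b : ℕ) (ha : 1 ≤ a) :
    (a < b →
      (orbitSet d a b).ncard = d.choose a * (d - a).choose b * 2 ^ (a + b - 2)) ∧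
    (a = b →
      2 * (orbitSet d a b).ncard = d.choose a * (d - a).choose b * 2 ^ (a + b - 2)) := by
  constructor
  · intro hlt
    rw [ncard_orbitSet ha (by omega), orderedPairs_of_lt hlt, card_disjointPairs,
      Fintype.card_fin]
  · rintro rfl
    rw [ncard_orbitSet ha ha, ← mul_assoc, two_mul_card_orderedPairs_self ha, card_disjointPairs,
      Fintype.card_fin]

/-- the cardinality of the orbit `O^{(d)}_{a,b}` is
`C(d,a)·C(d−a,b)·2^{a+b−2}` if `a < b`, and half of that if `a = b`. -/
theorem stmt9 (d a b : ℕ) (hd : 0 < d) (ha : 1 ≤ a) (hab : a ≤ b) (habd : a + b ≤ d) :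
    (a < b →
      (orbitSet d a b).ncard = d.choose a * (d - a).choose b * 2 ^ (a + b - 2)) ∧
    (a = b →
      2 * (orbitSet d a b).ncard = d.choose a * (d - a).choose b * 2 ^ (a + b - 2)) :=
  stmt9_general d a b ha
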